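/- arXiv:1001.1597 — 2 statements merged into one kernel-verified Lean document; each statement's English description precedes it below -/
import Mathlib

section
/- Let D be a commutative integral domain and s ∈ D^n a sequence whose prefix s^(n−1) is geometric with common ratio r ∈ D, r ≠ 0 (s_{j+1} = r·s_j for 1 ≤ j ≤ n−2, s_1 ≠ 0), but s is not geometric (s_n ≠ r·s_{n−1}). Then LC(s) = n − 1. -/
open Polynomial Finset

/-- `f` is a (nonzero) annihilator of the finite sequence `s_1,…,s_n`:
`f_0 s_{j-d} + … + f_d s_j = 0` for all `d+1 ≤ j ≤ n`, where `d = deg f`. -/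
def Annih (D : Type*) [CommRing D] (s : ℕ → D) (n : ℕ) (f : Polynomial D) : Prop :=
  f ≠ 0 ∧ ∀ j : ℕ, f.natDegree + 1 ≤ j → j ≤ n →
    ∑ k ∈ Finset.range (f.natDegree + 1), f.coeff k * s (j - f.natDegree + k) = 0

/-- The linear complexity of `s_1,…,s_n`: minimal degree of a nonzero annihilator. -/
noncomputable def LC (D : Type*) [CommRing D] (s : ℕ → D) (n : ℕ) : ℕ :=
  sInf {d : ℕ | ∃ f : Polynomial D, Annih D s n f ∧ f.natDegree = d}

/-- The discrepancy `Δ_n(f) = Σ_{k=0}^{d} f_k s_{n-d+k}`. -/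
def disc (D : Type*) [CommRing D] (s : ℕ → D) (n : ℕ) (f : Polynomial D) : D :=
  ∑ k ∈ Finset.range (f.natDegree + 1), f.coeff k * s (n - f.natDegree + k)

/-
Every sequence with `s₁ ≠ 0` is annihilated by `s₁ X^{n-1} - sₙ`, so `LC(s) ≤ n - 1`. Conversely, let
`f` annihilate `s` with `d = deg f < n - 1`, and compare `s` with the geometric sequence
`gⱼ = s₁ r^{j-1}`, which agrees with `s` except possibly at `j = n`. The annihilation condition at
`j = d + 1` reads `s₁ f(r) = 0`, so `f(r) = 0`; at `j = n` it then reduces to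
`f_d (sₙ - gₙ) = 0`, forcing `sₙ = r sₙ₋₁`.
-/

theorem eq_mul_pow_of_succ_eq_mul {M : Type*} [CommMonoid M] (s : ℕ → M) (r : M) (m : ℕ)
    (h : ∀ j, 1 ≤ j → j + 1 ≤ m → s (j + 1) = r * s j) :
    ∀ j, 1 ≤ j → j ≤ m → s j = s 1 * r ^ (j - 1) := by
  intro j hj
  induction j, hj using Nat.le_induction with
  | base => simp
  | succ j hj ih =>
    intro hjm
    rw [h j hj hjm, ih (by omega), show j + 1 - 1 = j - 1 + 1 by omega, pow_succ',
      mul_left_comm]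

section Discrepancy

variable {D : Type*} [CommRing D] {s t : ℕ → D} {j : ℕ} {f : D[X]}

theorem disc_congr (hj : f.natDegree ≤ j) (h : ∀ i, j - f.natDegree ≤ i → i ≤ j → s i = t i) :
    disc D s j f = disc D t j f :=
  sum_congr rfl fun k hk => by
    rw [h _ (by omega) (by simp only [mem_range] at hk; omega)]

theorem disc_eq_disc_add_leadingCoeff_mul (hj : f.natDegree ≤ j)
    (h : ∀ i, j - f.natDegree ≤ i → i < j → s i = t i) :
    disc D s j f = disc D t j f + f.leadingCoeff * (s j - t j) := by
  have hlast : j - f.natDegree + f.natDegree = j := by omega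
  have hinit : ∑ k ∈ range f.natDegree, f.coeff k * s (j - f.natDegree + k) =
      ∑ k ∈ range f.natDegree, f.coeff k * t (j - f.natDegree + k) :=
    sum_congr rfl fun k hk => by
      rw [h _ (by omega) (by simp only [mem_range] at hk; omega)]
  simp only [disc, sum_range_succ, hinit, hlast, leadingCoeff]
  ring

theorem disc_geometric (c r : D) (hj : f.natDegree < j) :
    disc D (fun i => c * r ^ (i - 1)) j f = c * r ^ (j - f.natDegree - 1) * f.eval r := by
  rw [eval_eq_sum_range, mul_sum]
  refine sum_congr rfl fun k _ => ?_
  dsimp only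
  rw [show j - f.natDegree + k - 1 = j - f.natDegree - 1 + k by omega, pow_add]
  ring

end Discrepancy

section LinearComplexity

variable {D : Type*} [CommRing D] {s : ℕ → D} {n : ℕ}

theorem LC_le_natDegree {f : D[X]} (hf : Annih D s n f) : LC D s n ≤ f.natDegree :=
  Nat.sInf_le ⟨f, hf, rfl⟩

theorem le_LC {m : ℕ} (hex : ∃ f, Annih D s n f) (hle : ∀ f, Annih D s n f → m ≤ f.natDegree) :
    m ≤ LC D s n := by
  obtain ⟨f, hf⟩ := hex
  exact le_csInf ⟨_, f, hf, rfl⟩ fun d ⟨g, hg, hd⟩ => hd ▸ hle g hg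

theorem natDegree_C_mul_X_pow_sub_C {a : D} (b : D) (m : ℕ) (ha : a ≠ 0) :
    (C a * X ^ m - C b).natDegree = m := by
  rw [natDegree_sub_C, natDegree_C_mul_X_pow _ _ ha]

theorem annih_C_mul_X_pow_sub_C (hn : 2 ≤ n) (hs1 : s 1 ≠ 0) :
    Annih D s n (C (s 1) * X ^ (n - 1) - C (s n)) := by
  have hdeg := natDegree_C_mul_X_pow_sub_C (s n) (n - 1) hs1
  refine ⟨ne_zero_of_natDegree_gt (n := 0) (by omega), fun j hj1 hjn => ?_⟩
  rw [show j = n by omega, hdeg, show n - (n - 1) = 1 by omega]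
  simp only [coeff_sub, coeff_C_mul_X_pow, coeff_C, sub_mul, ite_mul, zero_mul, sum_sub_distrib,
    sum_ite_eq', mem_range, if_pos (Nat.lt_succ_self _), if_pos (Nat.succ_pos _),
    show 1 + (n - 1) = n by omega]
  ring

variable [IsDomain D]

theorem pred_le_natDegree_of_annih {r : D} {f : D[X]} (hs1 : s 1 ≠ 0)
    (hpre : ∀ j, 1 ≤ j → j < n → s j = s 1 * r ^ (j - 1))
    (hlast : s n ≠ s 1 * r ^ (n - 1)) (hf : Annih D s n f) : n - 1 ≤ f.natDegree := by
  by_contra! hlt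
  have hroot : f.eval r = 0 := by
    have h : disc D s (f.natDegree + 1) f = 0 := hf.2 _ le_rfl (by omega)
    rw [disc_congr (t := fun i => s 1 * r ^ (i - 1)) (by omega)
        fun i hi hi' => hpre i (by omega) (by omega),
      disc_geometric _ _ (by omega)] at h
    simpa [hs1] using h
  have h : disc D s n f = 0 := hf.2 n (by omega) le_rfl
  rw [disc_eq_disc_add_leadingCoeff_mul (t := fun i => s 1 * r ^ (i - 1)) (by omega)
      fun i hi hi' => hpre i (by omega) hi',
    disc_geometric _ _ (by omega), hroot, mul_zero, zero_add] at h
  rcases mul_eq_zero.mp h with h | h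
  · exact hf.1 (leadingCoeff_eq_zero.mp h)
  · exact hlast (sub_eq_zero.mp h)

end LinearComplexity

theorem LC_of_geometric_prefix_general (D : Type*) [CommRing D] [IsDomain D]
    (n : ℕ) (hn : 2 ≤ n) (s : ℕ → D) (r : D)
    (hs1 : s 1 ≠ 0)
    (hgeo : ∀ j, 1 ≤ j → j ≤ n - 2 → s (j + 1) = r * s j)
    (hlast : s n ≠ r * s (n - 1)) :
    LC D s n = n - 1 := by
  have hpre := eq_mul_pow_of_succ_eq_mul s r (n - 1) fun j hj hjn => hgeo j hj (by omega)
  have hlast' : s n ≠ s 1 * r ^ (n - 1) := by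
    rwa [hpre (n - 1) (by omega) le_rfl, mul_left_comm, ← pow_succ',
      show n - 1 - 1 + 1 = n - 1 by omega] at hlast
  have hann := annih_C_mul_X_pow_sub_C hn hs1
  refine le_antisymm ?_ <| le_LC ⟨_, hann⟩ fun f =>
    pred_le_natDegree_of_annih hs1 (fun j hj hjn => hpre j hj (by omega)) hlast'
  calc LC D s n ≤ (C (s 1) * X ^ (n - 1) - C (s n)).natDegree := LC_le_natDegree hann
    _ = n - 1 := natDegree_C_mul_X_pow_sub_C _ _ hs1

theorem LC_of_geometric_prefix (D : Type*) [CommRing D] [IsDomain D]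
    (n : ℕ) (hn : 2 ≤ n) (s : ℕ → D) (r : D) (hr : r ≠ 0)
    (hs1 : s 1 ≠ 0)
    (hgeo : ∀ j, 1 ≤ j → j ≤ n - 2 → s (j + 1) = r * s j)
    (hlast : s n ≠ r * s (n - 1)) :
    LC D s n = n - 1 :=
  LC_of_geometric_prefix_general D n hn s r hs1 hgeo hlast
end

section
/- Let D be a commutative integral domain, s ∈ D^n with n ≥ 2, h a minimal polynomial of the prefix s^(n−1) with Δ_n(h) ≠ 0, and g any nonzero annihilator of s. Then deg(g) ≥ max(n − deg(h), deg(h)). -/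
open Polynomial Finset

/-!
If `h` annihilates `s_1,…,s_{n-1}`, `g` annihilates `s_1,…,s_n` and `deg h + deg g < n`, then
expanding `Σ_{i,k} h_i g_k s_{n-d-e+i+k}` along `g` gives `0`, while expanding it along `h` leaves
only `g_e Δ_n(h)`; in a domain this contradicts `Δ_n(h) ≠ 0`. The bound `deg g ≥ deg h` is
minimality of `h`, since `g` also annihilates the shorter prefix.
-/

theorem Annih.mono {D : Type*} [CommRing D] {s : ℕ → D} {m n : ℕ} {f : Polynomial D}
    (hf : Annih D s n f) (hmn : m ≤ n) : Annih D s m f :=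
  ⟨hf.1, fun j hj hjm => hf.2 j hj (hjm.trans hmn)⟩

theorem Annih.disc_eq_zero {D : Type*} [CommRing D] {s : ℕ → D} {n j : ℕ} {f : Polynomial D}
    (hf : Annih D s n f) (hj : f.natDegree + 1 ≤ j) (hjn : j ≤ n) : disc D s j f = 0 :=
  hf.2 j hj hjn

theorem sum_coeff_mul_disc_comm {D : Type*} [CommRing D] (s : ℕ → D) (f g : Polynomial D)
    (N : ℕ) :
    ∑ i ∈ range (f.natDegree + 1), f.coeff i * disc D s (N + g.natDegree + i) g =
      ∑ k ∈ range (g.natDegree + 1), g.coeff k * disc D s (N + f.natDegree + k) f := by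
  simp only [disc, Nat.add_right_comm N _ _, Nat.add_sub_cancel, mul_sum]
  rw [sum_comm]
  refine sum_congr rfl fun k _ => sum_congr rfl fun i _ => ?_
  rw [Nat.add_right_comm N i k]
  ring

theorem leadingCoeff_mul_disc_eq_zero {D : Type*} [CommRing D] {s : ℕ → D} {n : ℕ}
    {h g : Polynomial D} (hh : Annih D s (n - 1) h) (hg : Annih D s n g)
    (hdeg : h.natDegree + g.natDegree < n) : g.leadingCoeff * disc D s n h = 0 := by
  set d := h.natDegree
  set e := g.natDegree
  have hcomm := sum_coeff_mul_disc_comm s h g (n - d - e)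
  have halong_g : ∀ i ∈ range (d + 1), h.coeff i * disc D s (n - d - e + e + i) g = 0 :=
    fun i hi => by
      have := mem_range.mp hi
      rw [hg.disc_eq_zero (by omega) (by omega), mul_zero]
  have halong_h : ∀ k ∈ range e, g.coeff k * disc D s (n - d - e + d + k) h = 0 :=
    fun k hk => by
      have := mem_range.mp hk
      rw [hh.disc_eq_zero (by omega) (by omega), mul_zero]
  rw [sum_eq_zero halong_g, sum_range_succ, sum_eq_zero halong_h, zero_add] at hcomm
  rw [leadingCoeff, hcomm]
  congr 2
  omega

theorem deg_ge_max_of_min_prefix_general (D : Type*) [CommRing D] [IsDomain D]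
    (n : ℕ) (s : ℕ → D) (h : Polynomial D)
    (hann : Annih D s (n - 1) h)
    (hmin : ∀ g, Annih D s (n - 1) g → h.natDegree ≤ g.natDegree)
    (hΔ : disc D s n h ≠ 0)
    (g : Polynomial D) (hg : Annih D s n g) :
    max (n - h.natDegree) h.natDegree ≤ g.natDegree := by
  have hde : h.natDegree ≤ g.natDegree := hmin g (hg.mono (Nat.sub_le n 1))
  refine max_le ?_ hde
  by_contra! hlt
  exact mul_ne_zero (leadingCoeff_ne_zero.mpr hg.1) hΔ
    (leadingCoeff_mul_disc_eq_zero hann hg (by omega))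

theorem deg_ge_max_of_min_prefix (D : Type*) [CommRing D] [IsDomain D]
    (n : ℕ) (hn : 2 ≤ n) (s : ℕ → D) (h : Polynomial D)
    (hann : Annih D s (n - 1) h)
    (hmin : ∀ g, Annih D s (n - 1) g → h.natDegree ≤ g.natDegree)
    (hΔ : disc D s n h ≠ 0)
    (g : Polynomial D) (hg : Annih D s n g) :
    max (n - h.natDegree) h.natDegree ≤ g.natDegree :=
  deg_ge_max_of_min_prefix_general D n s h hann hmin hΔ g hg
end
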